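/- For any simple graph G and integers 1 ≤ r ≤ s, we have ⌈s/r⌉ · λ_r(G) ≥ λ_s(G). -/

import Mathlib

open SimpleGraph

/-- `c` properly colors each vertex of `S` from its list `L`. -/
def IsPartialListColoring {V : Type*} (G : SimpleGraph V) (L : V → Finset ℕ)
    (S : Set V) (c : V → ℕ) : Prop :=
  (∀ v ∈ S, c v ∈ L v) ∧ ∀ u ∈ S, ∀ v ∈ S, G.Adj u v → c u ≠ c v

/-- `λ_L(G)`: the maximum number of vertices properly colorable from the lists of `L`. -/
noncomputable def lamL {V : Type*} (G : SimpleGraph V) (L : V → Finset ℕ) : ℕ :=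
  sSup {k | ∃ (S : Finset V) (c : V → ℕ), S.card = k ∧ IsPartialListColoring G L S c}

/-- `λ_t(G)`: the minimum of `λ_L(G)` over all `t`-list assignments `L`. -/
noncomputable def lam {V : Type*} (G : SimpleGraph V) (t : ℕ) : ℕ :=
  sInf {m | ∃ L : V → Finset ℕ, (∀ v, (L v).card = t) ∧ lamL G L = m}

/-- `G` admits a full proper coloring from the lists of `L`. -/
def ListColorable {V : Type*} (G : SimpleGraph V) (L : V → Finset ℕ) : Prop :=
  ∃ c : V → ℕ, (∀ v, c v ∈ L v) ∧ ∀ u v, G.Adj u v → c u ≠ c v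

/-- The list chromatic number of `G`. -/
noncomputable def listChromaticNumber {V : Type*} (G : SimpleGraph V) : ℕ :=
  sInf {k | ∀ L : V → Finset ℕ, (∀ v, (L v).card = k) → ListColorable G L}

/-!
Take an optimal `r`-list assignment `L'` and, writing `q = ⌈s/r⌉`, replace every colour `a` by the
`q` colours `q * a + i` with `i < q`. The new lists have `q * r ≥ s` colours, so they contain
`s`-lists `L`. A partial `L`-colouring `c` splits by the residue of `c v` mod `q` into `q` classes,
and on each class `v ↦ c v / q` is a partial `L'`-colouring, so each class has at most `λ_r(G)`
vertices.
-/

section PartialListColoring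

variable {V : Type*} (G : SimpleGraph V)

lemma isPartialListColoring_empty (L : V → Finset ℕ) (c : V → ℕ) :
    IsPartialListColoring G L ∅ c :=
  ⟨fun _ h => h.elim, fun _ h => h.elim⟩

lemma IsPartialListColoring.div_of_mod_eq {L L' : V → Finset ℕ} {S : Set V} {c : V → ℕ}
    {q : ℕ} (hc : IsPartialListColoring G L S c) (hL : ∀ v, ∀ x ∈ L v, x / q ∈ L' v) (i : ℕ) :
    IsPartialListColoring G L' {v ∈ S | c v % q = i} (fun v => c v / q) := by
  refine ⟨fun v hv => hL v _ (hc.1 v hv.1), fun u hu v hv huv hdiv => hc.2 u hu.1 v hv.1 huv ?_⟩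
  simp only at hdiv
  rw [← Nat.div_add_mod (c u) q, ← Nat.div_add_mod (c v) q, hdiv, hu.2, hv.2]

lemma le_lamL [Finite V] {L : V → Finset ℕ} {S : Finset V} {c : V → ℕ}
    (hc : IsPartialListColoring G L S c) : S.card ≤ lamL G L := by
  have := Fintype.ofFinite V
  refine le_csSup ⟨Fintype.card V, ?_⟩ ⟨S, c, rfl, hc⟩
  rintro k ⟨T, -, rfl, -⟩
  exact T.card_le_univ

lemma lamL_le {L : V → Finset ℕ} {m : ℕ}
    (h : ∀ (S : Finset V) (c : V → ℕ), IsPartialListColoring G L S c → S.card ≤ m) :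
    lamL G L ≤ m := by
  refine csSup_le ⟨0, ∅, fun _ => 0, rfl, ?_⟩ ?_
  · simpa using isPartialListColoring_empty G L (fun _ => 0)
  · rintro k ⟨S, c, rfl, hc⟩
    exact h S c hc

lemma lam_le_lamL {L : V → Finset ℕ} {t : ℕ} (hL : ∀ v, (L v).card = t) :
    lam G t ≤ lamL G L :=
  Nat.sInf_le ⟨L, hL, rfl⟩

lemma exists_lamL_eq_lam (t : ℕ) :
    ∃ L : V → Finset ℕ, (∀ v, (L v).card = t) ∧ lamL G L = lam G t :=
  Nat.sInf_mem (s := {m | ∃ L : V → Finset ℕ, (∀ v, (L v).card = t) ∧ lamL G L = m})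
    ⟨_, fun _ => Finset.range t, fun _ => Finset.card_range t, rfl⟩

lemma lamL_le_mul_lamL [Finite V] {L L' : V → Finset ℕ} {q : ℕ} (hq : 0 < q)
    (hL : ∀ v, ∀ x ∈ L v, x / q ∈ L' v) : lamL G L ≤ q * lamL G L' := by
  classical
  refine lamL_le G fun S c hc => ?_
  calc S.card = ∑ i ∈ Finset.range q, {v ∈ S | c v % q = i}.card :=
        Finset.card_eq_sum_card_fiberwise fun v _ => Finset.mem_range.2 (Nat.mod_lt _ hq)
    _ ≤ ∑ _i ∈ Finset.range q, lamL G L' :=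
        Finset.sum_le_sum fun i _ => le_lamL G (by simpa using hc.div_of_mod_eq G hL i)
    _ = q * lamL G L' := by simp

end PartialListColoring

def blowUp (q : ℕ) (A : Finset ℕ) : Finset ℕ :=
  (A ×ˢ Finset.range q).image fun p => q * p.1 + p.2

lemma div_mem_of_mem_blowUp {q x : ℕ} {A : Finset ℕ} (hx : x ∈ blowUp q A) : x / q ∈ A := by
  obtain ⟨⟨a, i⟩, hai, rfl⟩ := Finset.mem_image.1 hx
  obtain ⟨ha, hi⟩ := Finset.mem_product.1 hai
  rw [Finset.mem_range] at hi
  rwa [Nat.mul_add_div (by omega), Nat.div_eq_of_lt hi, add_zero]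

lemma card_blowUp (q : ℕ) (A : Finset ℕ) : (blowUp q A).card = q * A.card := by
  rw [blowUp, Finset.card_image_of_injOn, Finset.card_product, Finset.card_range, mul_comm]
  rintro ⟨a, i⟩ hai ⟨b, j⟩ hbj (h : q * a + i = q * b + j)
  simp only [Finset.coe_product, Set.mem_prod, Finset.coe_range, Set.mem_Iio] at hai hbj
  have hq : 0 < q := by omega
  have hij : i = j := by
    simpa [Nat.mul_add_mod, Nat.mod_eq_of_lt hai.2, Nat.mod_eq_of_lt hbj.2] using congrArg (· % q) h
  have hab : a = b := by
    simpa [Nat.mul_add_div hq, Nat.div_eq_of_lt hai.2, Nat.div_eq_of_lt hbj.2] using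
      congrArg (· / q) h
  rw [hab, hij]

theorem lam_ceil_inequality {V : Type*} [Fintype V] (G : SimpleGraph V)
    (r s : ℕ) (hr : 1 ≤ r) (hrs : r ≤ s) :
    lam G s ≤ (s ⌈/⌉ r) * lam G r := by
  set q := s ⌈/⌉ r
  have hsq : s ≤ r * q := by simpa using le_smul_ceilDiv (b := s) (a := r) hr
  have hq : 0 < q := Nat.pos_of_ne_zero fun h => by simp [h] at hsq; omega
  obtain ⟨L', hL'card, hL'⟩ := exists_lamL_eq_lam G r
  have hsub : ∀ v, ∃ T ⊆ blowUp q (L' v), T.card = s := fun v =>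
    Finset.exists_subset_card_eq (by rw [card_blowUp, hL'card, mul_comm]; exact hsq)
  choose L hLsub hLcard using hsub
  calc lam G s ≤ lamL G L := lam_le_lamL G hLcard
    _ ≤ q * lamL G L' := lamL_le_mul_lamL G hq fun v x hx => div_mem_of_mem_blowUp (hLsub v hx)
    _ = q * lam G r := by rw [hL']
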